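/- For p = 1, any c > 0, and any probabilistic polyline sets X, Y, Z over a metric space (E, d), the DAP similarity satisfies S_PLD^{(c,1)}(Y, Y) + S_PLD^{(c,1)}(X, Z) ≥ S_PLD^{(c,1)}(X, Y) + S_PLD^{(c,1)}(Y, Z). -/

import Mathlib

open scoped BigOperators

/-- A polyline: a finite sequence of points of `E`, given by its length and an
indexing function. -/
def Polyline (E : Type*) : Type _ := Σ n : ℕ, Fin n → E

/-- An ordered assignment set between `{1,…,n}` and `{1,…,m}`: each first index and each
second index appears at most once, and the pairs respect a strictly increasing order. -/
def IsOrderedAssignment {n m : ℕ} (θ : Finset (Fin n × Fin m)) : Prop :=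
  ∀ a ∈ θ, ∀ b ∈ θ, (a.1 < b.1 ↔ a.2 < b.2)

/-- A (not necessarily ordered) assignment set: each first index and each second index
appears at most once. -/
def IsAssignment {n m : ℕ} (θ : Finset (Fin n × Fin m)) : Prop :=
  ∀ a ∈ θ, ∀ b ∈ θ, (a.1 = b.1 ↔ a.2 = b.2)

/-- The assignment cost `C(θ, x, y)` of an assignment set `θ` between polylines `x` and `y`. -/
noncomputable def cost {E : Type*} [MetricSpace E] (c p : ℝ) (x y : Polyline E)
    (θ : Finset (Fin x.1 × Fin y.1)) : ℝ :=
  (∑ ij ∈ θ, dist (x.2 ij.1) (y.2 ij.2) ^ p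
    + c ^ p / 2 * ((x.1 : ℝ) + (y.1 : ℝ) - 2 * (θ.card : ℝ))) ^ (1 / p)

/-- The SOSPA distance: the minimum assignment cost over all ordered assignment sets. -/
noncomputable def dSOSPA {E : Type*} [MetricSpace E] (c p : ℝ) (x y : Polyline E) : ℝ :=
  ⨅ θ : {θ : Finset (Fin x.1 × Fin y.1) // IsOrderedAssignment θ}, cost c p x y θ.1

/-- The normalized SOSPA, valued in `[0,1]`, with the convention that it is `0` when
both polylines are empty. -/
noncomputable def dSOSPAn {E : Type*} [MetricSpace E] (c p : ℝ) (x y : Polyline E) : ℝ :=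
  if x.1 = 0 ∧ y.1 = 0 then 0
  else 2 * dSOSPA c p x y /
    ((c ^ p / 2 * ((x.1 : ℝ) + (y.1 : ℝ))) ^ (1 / p) + dSOSPA c p x y)

/-- The cost of a trace `T` (an ordered assignment set) for the generalized edit distance
with substitution costs `γsub`, deletion costs `γdel`, and insertion costs `γins`. -/
noncomputable def traceCost {n m : ℕ} (γsub : Fin n → Fin m → ℝ) (γdel : Fin n → ℝ)
    (γins : Fin m → ℝ) (T : Finset (Fin n × Fin m)) : ℝ :=
  ∑ ij ∈ T, γsub ij.1 ij.2
    + ∑ i ∈ Finset.univ.filter (fun i => ∀ j, (i, j) ∉ T), γdel i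
    + ∑ j ∈ Finset.univ.filter (fun j => ∀ i, (i, j) ∉ T), γins j

/-- The composition `θ₁ ∘ θ₂` of two assignment sets. -/
def composeAssignment {n k m : ℕ} (θ₁ : Finset (Fin n × Fin k)) (θ₂ : Finset (Fin k × Fin m)) :
    Finset (Fin n × Fin m) :=
  Finset.univ.filter fun im => ∃ j, (im.1, j) ∈ θ₁ ∧ (j, im.2) ∈ θ₂

/-- The cyclic shift `S_s(x)` of a polyline `x`: the `k`-th point of `S_s(x)` is the
`⟨k+s⟩_{|x|}`-th point of `x`. -/
def shift {E : Type*} (s : ℕ) (x : Polyline E) : Polyline E :=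
  ⟨x.1, fun i => x.2 ⟨((i : ℕ) + s) % x.1, Nat.mod_lt _ i.pos⟩⟩

/-- A probabilistic polyline set: a finite indexed family of confidence–polyline pairs,
with confidences in `[0,1]`. -/
structure PPSet (E : Type*) where
  n : ℕ
  r : Fin n → ℝ
  poly : Fin n → Polyline E
  r_nonneg : ∀ i, 0 ≤ r i
  r_le_one : ∀ i, r i ≤ 1

/-- `R_X`, the total confidence of a probabilistic polyline set. -/
noncomputable def totalR {E : Type*} (X : PPSet E) : ℝ := ∑ i, X.r i

/-- The DAP distance `d_PLD^{(c,p)}` between two probabilistic polyline sets. -/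
noncomputable def dPLD {E : Type*} [MetricSpace E] (c p : ℝ) (X Y : PPSet E) : ℝ :=
  (⨅ θ : {θ : Finset (Fin X.n × Fin Y.n) // IsAssignment θ},
    (∑ ij ∈ θ.1, (min (X.r ij.1) (Y.r ij.2) * dSOSPAn c p (X.poly ij.1) (Y.poly ij.2) ^ p
        + |X.r ij.1 - Y.r ij.2| / 2)
      + (∑ i ∈ Finset.univ.filter (fun i => ∀ j, (i, j) ∉ θ.1), X.r i
          + ∑ j ∈ Finset.univ.filter (fun j => ∀ i, (i, j) ∉ θ.1), Y.r j) / 2)) ^ (1 / p)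

/-- The DAP similarity (for `p = 1`). -/
noncomputable def SPLD {E : Type*} [MetricSpace E] (c : ℝ) (X Y : PPSet E) : ℝ :=
  ((totalR X + totalR Y) / 2 - dPLD c 1 X Y) / 2

/-- The normalized DAP, with the convention that it equals `0` when the denominator is `0`. -/
noncomputable def dPLDn {E : Type*} [MetricSpace E] (c p : ℝ) (X Y : PPSet E) : ℝ :=
  if ((totalR X + totalR Y) / 2) ^ (1 / p) + dPLD c p X Y = 0 then 0
  else 2 * dPLD c p X Y / (((totalR X + totalR Y) / 2) ^ (1 / p) + dPLD c p X Y)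

/-- The multiset of confidence–polyline pairs of a probabilistic polyline set. -/
def PPSet.toMultiset {E : Type*} (X : PPSet E) : Multiset (ℝ × Polyline E) :=
  Finset.univ.val.map fun i => (X.r i, X.poly i)


section Aux
variable {n m l : ℕ}

lemma IsAssignment.fst_inj {θ : Finset (Fin n × Fin m)} (h : IsAssignment θ)
    {a b : Fin n × Fin m} (ha : a ∈ θ) (hb : b ∈ θ) (hab : a.1 = b.1) : a = b :=
  Prod.ext hab ((h a ha b hb).1 hab)

lemma IsAssignment.snd_inj {θ : Finset (Fin n × Fin m)} (h : IsAssignment θ)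
    {a b : Fin n × Fin m} (ha : a ∈ θ) (hb : b ∈ θ) (hab : a.2 = b.2) : a = b :=
  Prod.ext ((h a ha b hb).2 hab) hab

lemma IsOrderedAssignment.isAssignment {θ : Finset (Fin n × Fin m)}
    (h : IsOrderedAssignment θ) : IsAssignment θ := by
  intro a ha b hb
  constructor
  · intro he
    by_contra hne
    rcases lt_or_gt_of_ne hne with hlt | hlt
    · exact absurd ((h a ha b hb).2 hlt) (by simp [he])
    · exact absurd ((h b hb a ha).2 hlt) (by simp [he])
  · intro he
    by_contra hne
    rcases lt_or_gt_of_ne hne with hlt | hlt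
    · exact absurd ((h a ha b hb).1 hlt) (by simp [he])
    · exact absurd ((h b hb a ha).1 hlt) (by simp [he])

lemma IsAssignment.card_le_left {θ : Finset (Fin n × Fin m)} (h : IsAssignment θ) :
    θ.card ≤ n := by
  have : θ.card = (θ.image Prod.fst).card :=
    (Finset.card_image_of_injOn (fun a ha b hb hab => h.fst_inj ha hb hab)).symm
  rw [this]
  simpa using Finset.card_le_univ (θ.image Prod.fst)

lemma IsAssignment.card_le_right {θ : Finset (Fin n × Fin m)} (h : IsAssignment θ) :
    θ.card ≤ m := by
  have : θ.card = (θ.image Prod.snd).card :=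
    (Finset.card_image_of_injOn (fun a ha b hb hab => h.snd_inj ha hb hab)).symm
  rw [this]
  simpa using Finset.card_le_univ (θ.image Prod.snd)

lemma emptyIsOrdered : IsOrderedAssignment (∅ : Finset (Fin n × Fin m)) := by
  intro a ha; simp at ha

instance instNEOA : Nonempty {θ : Finset (Fin n × Fin m) // IsOrderedAssignment θ} :=
  ⟨⟨∅, emptyIsOrdered⟩⟩

instance instNEA : Nonempty {θ : Finset (Fin n × Fin m) // IsAssignment θ} :=
  ⟨⟨∅, fun a ha => by simp at ha⟩⟩

/-- generic attainment of a real iInf over a finite nonempty index type -/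
lemma exists_iInf_eq {ι : Type*} [Finite ι] [Nonempty ι] (f : ι → ℝ) :
    ∃ i, (⨅ j, f j) = f i ∧ ∀ j, f i ≤ f j := by
  obtain ⟨i, hi⟩ := Finite.exists_min f
  refine ⟨i, le_antisymm (ciInf_le (Set.finite_range f).bddBelow i) (le_ciInf hi), hi⟩

lemma myiInf_le {ι : Type*} [Finite ι] [Nonempty ι] (f : ι → ℝ) (i : ι) : (⨅ j, f j) ≤ f i :=
  ciInf_le (Set.finite_range f).bddBelow i

end Aux

section Cost
variable {E : Type*} [MetricSpace E] (c : ℝ) (x y : Polyline E)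

lemma cost_one (θ : Finset (Fin x.1 × Fin y.1)) :
    cost c 1 x y θ
      = ∑ ij ∈ θ, dist (x.2 ij.1) (y.2 ij.2)
        + c / 2 * ((x.1 : ℝ) + (y.1 : ℝ) - 2 * (θ.card : ℝ)) := by
  simp [cost, Real.rpow_one]

variable {c} (hc : 0 < c)
include hc

lemma cost_one_nonneg {θ : Finset (Fin x.1 × Fin y.1)} (h : IsAssignment θ) :
    0 ≤ cost c 1 x y θ := by
  rw [cost_one]
  have h1 : (θ.card : ℝ) ≤ x.1 := by exact_mod_cast h.card_le_left
  have h2 : (θ.card : ℝ) ≤ y.1 := by exact_mod_cast h.card_le_right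
  have : 0 ≤ ∑ ij ∈ θ, dist (x.2 ij.1) (y.2 ij.2) :=
    Finset.sum_nonneg fun _ _ => dist_nonneg
  nlinarith

lemma dSOSPA_nonneg : 0 ≤ dSOSPA c 1 x y :=
  le_ciInf fun θ => cost_one_nonneg x y hc θ.2.isAssignment

lemma dSOSPA_le_D : dSOSPA c 1 x y ≤ c / 2 * ((x.1 : ℝ) + y.1) := by
  refine le_trans (myiInf_le _ ⟨∅, emptyIsOrdered⟩) ?_
  rw [cost_one]
  simp

lemma dSOSPA_lb : c / 2 * ((y.1 : ℝ) - x.1) ≤ dSOSPA c 1 x y := by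
  refine le_ciInf fun θ => ?_
  rw [cost_one]
  have h1 : (θ.1.card : ℝ) ≤ x.1 := by exact_mod_cast θ.2.isAssignment.card_le_left
  have : 0 ≤ ∑ ij ∈ θ.1, dist (x.2 ij.1) (y.2 ij.2) :=
    Finset.sum_nonneg fun _ _ => dist_nonneg
  nlinarith

lemma dSOSPA_lb' : c / 2 * ((x.1 : ℝ) - y.1) ≤ dSOSPA c 1 x y := by
  refine le_ciInf fun θ => ?_
  rw [cost_one]
  have h1 : (θ.1.card : ℝ) ≤ y.1 := by exact_mod_cast θ.2.isAssignment.card_le_right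
  have : 0 ≤ ∑ ij ∈ θ.1, dist (x.2 ij.1) (y.2 ij.2) :=
    Finset.sum_nonneg fun _ _ => dist_nonneg
  nlinarith

lemma dSOSPA_self : dSOSPA c 1 x x = 0 := by
  refine le_antisymm ?_ (dSOSPA_nonneg x x hc)
  have hdiag : IsOrderedAssignment ((Finset.univ : Finset (Fin x.1)).image fun i => (i, i)) := by
    intro a ha b hb
    simp only [Finset.mem_image] at ha hb
    obtain ⟨i, -, rfl⟩ := ha
    obtain ⟨j, -, rfl⟩ := hb
    exact Iff.rfl
  refine le_trans (myiInf_le (fun θ : {θ : Finset (Fin x.1 × Fin x.1) // IsOrderedAssignment θ} =>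
    cost c 1 x x θ.1) ⟨_, hdiag⟩) ?_
  rw [cost_one]
  have hcard : ((Finset.univ : Finset (Fin x.1)).image fun i => (i, i)).card = x.1 := by
    rw [Finset.card_image_of_injective _ (fun i j h => (Prod.ext_iff.1 h).1)]
    simp
  have hsum : ∑ ij ∈ (Finset.univ : Finset (Fin x.1)).image (fun i => (i, i)),
      dist (x.2 ij.1) (x.2 ij.2) = 0 := by
    refine Finset.sum_eq_zero fun ij hij => ?_
    simp only [Finset.mem_image] at hij
    obtain ⟨i, -, rfl⟩ := hij
    simp
  rw [hcard, hsum]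
  ring_nf
  simp

end Cost

section Compose
variable {n m l : ℕ}

lemma mem_composeAssignment (θ₁ : Finset (Fin n × Fin m)) (θ₂ : Finset (Fin m × Fin l))
    (t : Fin n × Fin l) :
    t ∈ composeAssignment θ₁ θ₂ ↔ ∃ j, (t.1, j) ∈ θ₁ ∧ (j, t.2) ∈ θ₂ := by
  simp [composeAssignment]

lemma composeAssignment_isAssignment {θ₁ : Finset (Fin n × Fin m)} {θ₂ : Finset (Fin m × Fin l)}
    (h₁ : IsAssignment θ₁) (h₂ : IsAssignment θ₂) :
    IsAssignment (composeAssignment θ₁ θ₂) := by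
  intro a ha b hb
  obtain ⟨ja, ha1, ha2⟩ := (mem_composeAssignment θ₁ θ₂ a).1 ha
  obtain ⟨jb, hb1, hb2⟩ := (mem_composeAssignment θ₁ θ₂ b).1 hb
  constructor
  · intro he
    have hj : ja = jb := (h₁ _ ha1 _ hb1).1 he
    exact (h₂ _ ha2 _ hb2).1 hj
  · intro he
    have hj : ja = jb := (h₂ _ ha2 _ hb2).2 he
    exact (h₁ _ ha1 _ hb1).2 hj

lemma composeAssignment_isOrdered {θ₁ : Finset (Fin n × Fin m)} {θ₂ : Finset (Fin m × Fin l)}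
    (h₁ : IsOrderedAssignment θ₁) (h₂ : IsOrderedAssignment θ₂) :
    IsOrderedAssignment (composeAssignment θ₁ θ₂) := by
  intro a ha b hb
  obtain ⟨ja, ha1, ha2⟩ := (mem_composeAssignment θ₁ θ₂ a).1 ha
  obtain ⟨jb, hb1, hb2⟩ := (mem_composeAssignment θ₁ θ₂ b).1 hb
  rw [show a.1 < b.1 ↔ ja < jb from h₁ _ ha1 _ hb1]
  exact h₂ _ ha2 _ hb2

variable (θ₁ : Finset (Fin n × Fin m)) (θ₂ : Finset (Fin m × Fin l)) [Nonempty (Fin m)]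

/-- the middle-index witness function of a composed assignment -/
noncomputable def gmid : Fin n × Fin l → Fin m := fun t =>
  if h : ∃ j, (t.1, j) ∈ θ₁ ∧ (j, t.2) ∈ θ₂ then h.choose else Classical.arbitrary _

lemma gmid_spec {t : Fin n × Fin l} (ht : t ∈ composeAssignment θ₁ θ₂) :
    (t.1, gmid θ₁ θ₂ t) ∈ θ₁ ∧ (gmid θ₁ θ₂ t, t.2) ∈ θ₂ := by
  have h := (mem_composeAssignment θ₁ θ₂ t).1 ht
  rw [gmid, dif_pos h]
  exact h.choose_spec

/-- cardinality superadditivity of composition -/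
lemma card_compose {θ₁ : Finset (Fin n × Fin m)} {θ₂ : Finset (Fin m × Fin l)}
    (h₁ : IsAssignment θ₁) (h₂ : IsAssignment θ₂) :
    θ₁.card + θ₂.card ≤ m + (composeAssignment θ₁ θ₂).card := by
  classical
  set A := θ₁.image Prod.snd with hA
  set B := θ₂.image Prod.fst with hB
  have hcard1 : θ₁.card = A.card :=
    (Finset.card_image_of_injOn (fun a ha b hb hab => h₁.snd_inj ha hb hab)).symm
  have hcard2 : θ₂.card = B.card :=
    (Finset.card_image_of_injOn (fun a ha b hb hab => h₂.fst_inj ha hb hab)).symm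
  have hUnion : (A ∪ B).card ≤ m := by simpa using Finset.card_le_univ (A ∪ B)
  have hInter : (A ∩ B).card ≤ (composeAssignment θ₁ θ₂).card := by
    rcases Finset.eq_empty_or_nonempty (A ∩ B) with he | ⟨j₀, hj₀⟩
    · simp [he]
    · have hj₀A : j₀ ∈ A := (Finset.mem_inter.1 hj₀).1
      have hj₀B : j₀ ∈ B := (Finset.mem_inter.1 hj₀).2
      obtain ⟨p₀, -, -⟩ := Finset.mem_image.1 hj₀A
      haveI : Nonempty (Fin n) := ⟨p₀.1⟩
      obtain ⟨q₀, -, -⟩ := Finset.mem_image.1 hj₀B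
      haveI : Nonempty (Fin l) := ⟨q₀.2⟩
      set wA : Fin m → Fin n := fun j =>
        if h : ∃ i, (i, j) ∈ θ₁ then h.choose else Classical.arbitrary _ with hwA
      set wB : Fin m → Fin l := fun j =>
        if h : ∃ k, (j, k) ∈ θ₂ then h.choose else Classical.arbitrary _ with hwB
      have hwAspec : ∀ j ∈ A, (wA j, j) ∈ θ₁ := by
        intro j hj
        obtain ⟨p, hp, rfl⟩ := Finset.mem_image.1 hj
        have h : ∃ i, (i, p.2) ∈ θ₁ := ⟨p.1, hp⟩
        simp only [hwA, dif_pos h]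
        exact h.choose_spec
      have hwBspec : ∀ j ∈ B, (j, wB j) ∈ θ₂ := by
        intro j hj
        obtain ⟨q, hq, rfl⟩ := Finset.mem_image.1 hj
        have h : ∃ k, (q.1, k) ∈ θ₂ := ⟨q.2, hq⟩
        simp only [hwB, dif_pos h]
        exact h.choose_spec
      refine Finset.card_le_card_of_injOn (fun j => (wA j, wB j)) ?_ ?_
      · intro j hj
        rw [Finset.mem_coe, mem_composeAssignment]
        exact ⟨j, hwAspec j (Finset.mem_inter.1 hj).1, hwBspec j (Finset.mem_inter.1 hj).2⟩
      · intro j hj j' hj' he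
        have h1 : (wA j, j) ∈ θ₁ := hwAspec j (Finset.mem_of_mem_inter_left hj)
        have h2 : (wA j', j') ∈ θ₁ := hwAspec j' (Finset.mem_of_mem_inter_left hj')
        have : wA j = wA j' := (Prod.ext_iff.1 he).1
        exact (h₁ _ h1 _ h2).1 this
  have := Finset.card_union_add_card_inter A B
  omega

end Compose

lemma dSOSPA_le_cost {E : Type*} [MetricSpace E] (c p : ℝ) (x y : Polyline E)
    {θ : Finset (Fin x.1 × Fin y.1)} (h : IsOrderedAssignment θ) :
    dSOSPA c p x y ≤ cost c p x y θ := by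
  unfold dSOSPA
  exact myiInf_le (fun θ' : {θ' : Finset (Fin x.1 × Fin y.1) // IsOrderedAssignment θ'} =>
    cost c p x y θ'.1) ⟨θ, h⟩

section Tri
variable {E : Type*} [MetricSpace E] {c : ℝ} (hc : 0 < c)
include hc

lemma dSOSPA_triangle (x y z : Polyline E) :
    dSOSPA c 1 x z ≤ dSOSPA c 1 x y + dSOSPA c 1 y z := by
  rcases Nat.eq_zero_or_pos y.1 with hm | hm
  · have h1 := dSOSPA_lb' x y hc
    have h2 := dSOSPA_lb y z hc
    have h3 := dSOSPA_le_D x z hc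
    rw [hm] at h1 h2
    push_cast at h1 h2
    nlinarith
  · haveI : Nonempty (Fin y.1) := ⟨⟨0, hm⟩⟩
    obtain ⟨θ₁, hθ₁, -⟩ := exists_iInf_eq
      (fun θ : {θ : Finset (Fin x.1 × Fin y.1) // IsOrderedAssignment θ} => cost c 1 x y θ.1)
    obtain ⟨θ₂, hθ₂, -⟩ := exists_iInf_eq
      (fun θ : {θ : Finset (Fin y.1 × Fin z.1) // IsOrderedAssignment θ} => cost c 1 y z θ.1)
    have hxy : dSOSPA c 1 x y = cost c 1 x y θ₁.1 := hθ₁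
    have hyz : dSOSPA c 1 y z = cost c 1 y z θ₂.1 := hθ₂
    set θ := composeAssignment θ₁.1 θ₂.1 with hθdef
    have hθord : IsOrderedAssignment θ := composeAssignment_isOrdered θ₁.2 θ₂.2
    have hmain : dSOSPA c 1 x z ≤ cost c 1 x z θ := dSOSPA_le_cost c 1 x z hθord
    have hdistsum : ∑ t ∈ θ, dist (x.2 t.1) (z.2 t.2)
        ≤ ∑ p ∈ θ₁.1, dist (x.2 p.1) (y.2 p.2) + ∑ q ∈ θ₂.1, dist (y.2 q.1) (z.2 q.2) := by
      have step1 : ∑ t ∈ θ, dist (x.2 t.1) (z.2 t.2)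
          ≤ ∑ t ∈ θ, (dist (x.2 t.1) (y.2 (gmid θ₁.1 θ₂.1 t))
              + dist (y.2 (gmid θ₁.1 θ₂.1 t)) (z.2 t.2)) :=
        Finset.sum_le_sum fun t _ => dist_triangle _ _ _
      rw [Finset.sum_add_distrib] at step1
      have hassign : IsAssignment θ := hθord.isAssignment
      have inj1 : Set.InjOn (fun t : Fin x.1 × Fin z.1 => (t.1, gmid θ₁.1 θ₂.1 t)) θ := by
        intro t ht t' ht' he
        exact hassign.fst_inj ht ht' (Prod.ext_iff.1 he).1
      have inj2 : Set.InjOn (fun t : Fin x.1 × Fin z.1 => (gmid θ₁.1 θ₂.1 t, t.2)) θ := by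
        intro t ht t' ht' he
        exact hassign.snd_inj ht ht' (Prod.ext_iff.1 he).2
      have b1 : ∑ t ∈ θ, dist (x.2 t.1) (y.2 (gmid θ₁.1 θ₂.1 t))
          ≤ ∑ p ∈ θ₁.1, dist (x.2 p.1) (y.2 p.2) := by
        have : ∑ t ∈ θ, dist (x.2 t.1) (y.2 (gmid θ₁.1 θ₂.1 t))
            = ∑ p ∈ θ.image (fun t => (t.1, gmid θ₁.1 θ₂.1 t)), dist (x.2 p.1) (y.2 p.2) := by
          rw [Finset.sum_image inj1]
        rw [this]
        refine Finset.sum_le_sum_of_subset_of_nonneg ?_ (fun _ _ _ => dist_nonneg)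
        intro p hp
        obtain ⟨t, ht, rfl⟩ := Finset.mem_image.1 hp
        exact (gmid_spec θ₁.1 θ₂.1 ht).1
      have b2 : ∑ t ∈ θ, dist (y.2 (gmid θ₁.1 θ₂.1 t)) (z.2 t.2)
          ≤ ∑ q ∈ θ₂.1, dist (y.2 q.1) (z.2 q.2) := by
        have : ∑ t ∈ θ, dist (y.2 (gmid θ₁.1 θ₂.1 t)) (z.2 t.2)
            = ∑ q ∈ θ.image (fun t => (gmid θ₁.1 θ₂.1 t, t.2)), dist (y.2 q.1) (z.2 q.2) := by
          rw [Finset.sum_image inj2]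
        rw [this]
        refine Finset.sum_le_sum_of_subset_of_nonneg ?_ (fun _ _ _ => dist_nonneg)
        intro q hq
        obtain ⟨t, ht, rfl⟩ := Finset.mem_image.1 hq
        exact (gmid_spec θ₁.1 θ₂.1 ht).2
      linarith
    -- cardinality bound
    have hcard : (θ₁.1.card : ℝ) + θ₂.1.card ≤ (y.1 : ℝ) + θ.card := by
      exact_mod_cast card_compose θ₁.2.isAssignment θ₂.2.isAssignment
    rw [hxy, hyz, cost_one, cost_one]
    rw [cost_one] at hmain
    nlinarith [hmain, hdistsum, hcard, hc]
end Tri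

section Norm
variable {E : Type*} [MetricSpace E] {c : ℝ} (hc : 0 < c)

lemma dSOSPAn_one (x y : Polyline E) :
    dSOSPAn c 1 x y = if x.1 = 0 ∧ y.1 = 0 then 0
      else 2 * dSOSPA c 1 x y / (c / 2 * ((x.1 : ℝ) + (y.1 : ℝ)) + dSOSPA c 1 x y) := by
  simp [dSOSPAn, Real.rpow_one]

include hc

lemma dSOSPAn_nonneg (x y : Polyline E) : 0 ≤ dSOSPAn c 1 x y := by
  rw [dSOSPAn_one]
  split
  · exact le_refl 0
  · have hd := dSOSPA_nonneg x y hc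
    have hD : 0 ≤ c / 2 * ((x.1 : ℝ) + (y.1 : ℝ)) := by positivity
    exact div_nonneg (by linarith) (by linarith)

lemma denom_pos (x y : Polyline E) (h : ¬(x.1 = 0 ∧ y.1 = 0)) :
    0 < c / 2 * ((x.1 : ℝ) + (y.1 : ℝ)) + dSOSPA c 1 x y := by
  have hd := dSOSPA_nonneg x y hc
  have hpos : 0 < (x.1 : ℝ) + (y.1 : ℝ) := by
    rcases not_and_or.1 h with h' | h' <;>
      [have := Nat.pos_of_ne_zero h'; have := Nat.pos_of_ne_zero h'] <;>
      [positivity; positivity]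
  positivity

lemma dSOSPAn_le_one (x y : Polyline E) : dSOSPAn c 1 x y ≤ 1 := by
  rw [dSOSPAn_one]
  split
  · norm_num
  · rename_i h
    rw [div_le_one (denom_pos hc x y h)]
    have := dSOSPA_le_D x y hc
    linarith

lemma dSOSPAn_self (x : Polyline E) : dSOSPAn c 1 x x = 0 := by
  rw [dSOSPAn_one]
  split
  · rfl
  · rw [dSOSPA_self x hc]
    simp

lemma dSOSPA_left_empty (x z : Polyline E) (h : x.1 = 0) :
    dSOSPA c 1 x z = c / 2 * (z.1 : ℝ) := by
  refine le_antisymm ?_ ?_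
  · have := dSOSPA_le_D x z hc
    rw [h] at this
    simpa using this
  · have := dSOSPA_lb x z hc
    rw [h] at this
    simpa using this

lemma dSOSPA_right_empty (x z : Polyline E) (h : z.1 = 0) :
    dSOSPA c 1 x z = c / 2 * (x.1 : ℝ) := by
  refine le_antisymm ?_ ?_
  · have := dSOSPA_le_D x z hc
    rw [h] at this
    simpa using this
  · have := dSOSPA_lb' x z hc
    rw [h] at this
    simpa using this

lemma dSOSPAn_triangle (x y z : Polyline E) :
    dSOSPAn c 1 x z ≤ dSOSPAn c 1 x y + dSOSPAn c 1 y z := by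
  by_cases hxy : x.1 = 0 ∧ y.1 = 0
  · -- dn x y = 0 and dn x z = dn y z
    have h1 : dSOSPAn c 1 x y = 0 := by rw [dSOSPAn_one]; exact if_pos hxy
    have h2 : dSOSPAn c 1 x z = dSOSPAn c 1 y z := by
      rw [dSOSPAn_one, dSOSPAn_one, dSOSPA_left_empty hc x z hxy.1,
        dSOSPA_left_empty hc y z hxy.2, hxy.1, hxy.2]
    rw [h1, h2]
    linarith
  · by_cases hyz : y.1 = 0 ∧ z.1 = 0
    · have h1 : dSOSPAn c 1 y z = 0 := by rw [dSOSPAn_one]; exact if_pos hyz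
      have h2 : dSOSPAn c 1 x z = dSOSPAn c 1 x y := by
        rw [dSOSPAn_one, dSOSPAn_one, dSOSPA_right_empty hc x z hyz.2,
          dSOSPA_right_empty hc x y hyz.1, hyz.1, hyz.2]
      rw [h1, h2]
      linarith
    · by_cases hxz : x.1 = 0 ∧ z.1 = 0
      · have h1 : dSOSPAn c 1 x z = 0 := by rw [dSOSPAn_one]; exact if_pos hxz
        rw [h1]
        have := dSOSPAn_nonneg hc x y
        have := dSOSPAn_nonneg hc y z
        linarith
      · rw [dSOSPAn_one, dSOSPAn_one, dSOSPAn_one, if_neg hxy, if_neg hyz, if_neg hxz]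
        set u := dSOSPA c 1 x y with hu
        set v := dSOSPA c 1 y z with hv
        set w := dSOSPA c 1 x z with hw
        set A := c / 2 * ((x.1 : ℝ) + (y.1 : ℝ)) with hA
        set B := c / 2 * ((y.1 : ℝ) + (z.1 : ℝ)) with hB
        set C := c / 2 * ((x.1 : ℝ) + (z.1 : ℝ)) with hC
        have hu0 : 0 ≤ u := dSOSPA_nonneg x y hc
        have hv0 : 0 ≤ v := dSOSPA_nonneg y z hc
        have hw0 : 0 ≤ w := dSOSPA_nonneg x z hc
        have htri : w ≤ u + v := dSOSPA_triangle hc x y z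
        have hAC : A ≤ C + v := by
          have := dSOSPA_lb' y z hc
          rw [hA, hC]
          push_cast at this ⊢
          nlinarith
        have hBC : B ≤ C + u := by
          have := dSOSPA_lb x y hc
          rw [hB, hC]
          push_cast at this ⊢
          nlinarith
        have hCpos : 0 < C + w := denom_pos hc x z hxz
        have hApos : 0 < A + u := denom_pos hc x y hxy
        have hBpos : 0 < B + v := denom_pos hc y z hyz
        have hCuv : 0 < C + (u + v) := by
          have hC0 : 0 ≤ C := by positivity
          rcases eq_or_lt_of_le hw0 with h0 | h0
          · -- w = 0; C > 0 since C + w > 0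
            nlinarith
          · nlinarith
        have step1 : 2 * w / (C + w) ≤ 2 * (u + v) / (C + (u + v)) := by
          rw [div_le_div_iff₀ hCpos hCuv]
          have hC0 : 0 ≤ C := by positivity
          nlinarith
        have step2 : 2 * (u + v) / (C + (u + v)) ≤ 2 * u / (A + u) + 2 * v / (B + v) := by
          have e1 : 2 * (u + v) / (C + (u + v)) = 2 * u / (C + (u + v)) + 2 * v / (C + (u + v)) := by
            rw [← add_div]; ring_nf
          rw [e1]
          have b1 : 2 * u / (C + (u + v)) ≤ 2 * u / (A + u) :=
            div_le_div_of_nonneg_left (by linarith) hApos (by linarith)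
          have b2 : 2 * v / (C + (u + v)) ≤ 2 * v / (B + v) :=
            div_le_div_of_nonneg_left (by linarith) hBpos (by linarith)
          linarith
        linarith
end Norm

section Dap
variable {E : Type*} [MetricSpace E]

/-- the matched-weight sum -/
noncomputable def Wfun (c : ℝ) (X Y : PPSet E) (θ : Finset (Fin X.n × Fin Y.n)) : ℝ :=
  ∑ ij ∈ θ, min (X.r ij.1) (Y.r ij.2) * (1 - dSOSPAn c 1 (X.poly ij.1) (Y.poly ij.2))

lemma keyScalar {r s u a b w : ℝ} (hr : 0 ≤ r) (hs : 0 ≤ s) (hu : 0 ≤ u)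
    (ha0 : 0 ≤ a) (ha1 : a ≤ 1) (hb0 : 0 ≤ b) (hb1 : b ≤ 1) (hw0 : 0 ≤ w) (hw1 : w ≤ 1)
    (hw : w ≤ a + b) :
    min r s * (1 - a) + min s u * (1 - b) ≤ s + min r u * (1 - w) := by
  simp only [min_def]
  split_ifs with h1 h2 h3 h4 h5 h6 h7 <;> nlinarith

variable {c : ℝ} (hc : 0 < c)
include hc

lemma Wterm_nonneg (X Y : PPSet E) (i : Fin X.n) (j : Fin Y.n) :
    0 ≤ min (X.r i) (Y.r j) * (1 - dSOSPAn c 1 (X.poly i) (Y.poly j)) := by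
  have h1 := dSOSPAn_le_one hc (X.poly i) (Y.poly j)
  exact mul_nonneg (le_min (X.r_nonneg i) (Y.r_nonneg j)) (by linarith)

lemma Wfun_nonneg (X Y : PPSet E) (θ : Finset (Fin X.n × Fin Y.n)) : 0 ≤ Wfun c X Y θ :=
  Finset.sum_nonneg fun ij _ => Wterm_nonneg hc X Y ij.1 ij.2

lemma totalR_nonneg (X : PPSet E) : 0 ≤ totalR X :=
  Finset.sum_nonneg fun i _ => X.r_nonneg i

lemma W_compose (X Y Z : PPSet E)
    {θ₁ : Finset (Fin X.n × Fin Y.n)} {θ₂ : Finset (Fin Y.n × Fin Z.n)}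
    (h₁ : IsAssignment θ₁) (h₂ : IsAssignment θ₂) :
    Wfun c X Y θ₁ + Wfun c Y Z θ₂
      ≤ totalR Y + Wfun c X Z (composeAssignment θ₁ θ₂) := by
  rcases Nat.eq_zero_or_pos Y.n with hm | hm
  · have hθ₁ : θ₁ = ∅ := Finset.eq_empty_of_forall_notMem fun p hp => by
      have : p.2.1 < Y.n := p.2.2
      omega
    have hθ₂ : θ₂ = ∅ := Finset.eq_empty_of_forall_notMem fun q hq => by
      have : q.1.1 < Y.n := q.1.2
      omega
    rw [hθ₁, hθ₂]
    have hR := totalR_nonneg hc Y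
    have hW := Wfun_nonneg hc X Z (composeAssignment (∅ : Finset (Fin X.n × Fin Y.n)) ∅)
    simp only [Wfun, Finset.sum_empty] at hW ⊢
    linarith
  · haveI : Nonempty (Fin Y.n) := ⟨⟨0, hm⟩⟩
    classical
    set θ := composeAssignment θ₁ θ₂ with hθdef
    have e1 : Wfun c X Y θ₁
        = ∑ j : Fin Y.n, ∑ p ∈ θ₁.filter fun p => p.2 = j,
            min (X.r p.1) (Y.r p.2) * (1 - dSOSPAn c 1 (X.poly p.1) (Y.poly p.2)) :=
      (Finset.sum_fiberwise θ₁ Prod.snd _).symm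
    have e2 : Wfun c Y Z θ₂
        = ∑ j : Fin Y.n, ∑ q ∈ θ₂.filter fun q => q.1 = j,
            min (Y.r q.1) (Z.r q.2) * (1 - dSOSPAn c 1 (Y.poly q.1) (Z.poly q.2)) :=
      (Finset.sum_fiberwise θ₂ Prod.fst _).symm
    have e3 : Wfun c X Z θ
        = ∑ j : Fin Y.n, ∑ t ∈ θ.filter fun t => gmid θ₁ θ₂ t = j,
            min (X.r t.1) (Z.r t.2) * (1 - dSOSPAn c 1 (X.poly t.1) (Z.poly t.2)) :=
      (Finset.sum_fiberwise θ (gmid θ₁ θ₂) _).symm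
    have e4 : totalR Y = ∑ j : Fin Y.n, Y.r j := rfl
    rw [e1, e2, e3, e4, ← Finset.sum_add_distrib, ← Finset.sum_add_distrib]
    refine Finset.sum_le_sum fun j _ => ?_
    have hFθ : 0 ≤ ∑ t ∈ θ.filter fun t => gmid θ₁ θ₂ t = j,
        min (X.r t.1) (Z.r t.2) * (1 - dSOSPAn c 1 (X.poly t.1) (Z.poly t.2)) :=
      Finset.sum_nonneg fun t _ => Wterm_nonneg hc X Z t.1 t.2
    by_cases hA : ∃ i, (i, j) ∈ θ₁
    · obtain ⟨i, hi⟩ := hA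
      have hf1 : θ₁.filter (fun p => p.2 = j) = {(i, j)} := by
        refine Finset.eq_singleton_iff_unique_mem.2 ⟨Finset.mem_filter.2 ⟨hi, rfl⟩, ?_⟩
        intro p hp
        obtain ⟨hpθ, hpj⟩ := Finset.mem_filter.1 hp
        exact h₁.snd_inj hpθ hi hpj
      by_cases hB : ∃ k, (j, k) ∈ θ₂
      · obtain ⟨k, hk⟩ := hB
        have hf2 : θ₂.filter (fun q => q.1 = j) = {(j, k)} := by
          refine Finset.eq_singleton_iff_unique_mem.2 ⟨Finset.mem_filter.2 ⟨hk, rfl⟩, ?_⟩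
          intro q hq
          obtain ⟨hqθ, hqj⟩ := Finset.mem_filter.1 hq
          exact h₂.fst_inj hqθ hk hqj
        have hmemθ : (i, k) ∈ θ := (mem_composeAssignment θ₁ θ₂ _).2 ⟨j, hi, hk⟩
        have hgj : gmid θ₁ θ₂ (i, k) = j := by
          have hsp := gmid_spec θ₁ θ₂ hmemθ
          exact (h₁ _ hsp.1 _ hi).1 rfl
        have hmem : (i, k) ∈ θ.filter fun t => gmid θ₁ θ₂ t = j :=
          Finset.mem_filter.2 ⟨hmemθ, hgj⟩
        have hsingle : min (X.r i) (Z.r k) * (1 - dSOSPAn c 1 (X.poly i) (Z.poly k))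
            ≤ ∑ t ∈ θ.filter fun t => gmid θ₁ θ₂ t = j,
              min (X.r t.1) (Z.r t.2) * (1 - dSOSPAn c 1 (X.poly t.1) (Z.poly t.2)) :=
          Finset.single_le_sum (fun t _ => Wterm_nonneg hc X Z t.1 t.2) hmem
        rw [hf1, hf2, Finset.sum_singleton, Finset.sum_singleton]
        have hkey := keyScalar (X.r_nonneg i) (Y.r_nonneg j) (Z.r_nonneg k)
          (dSOSPAn_nonneg hc (X.poly i) (Y.poly j)) (dSOSPAn_le_one hc (X.poly i) (Y.poly j))
          (dSOSPAn_nonneg hc (Y.poly j) (Z.poly k)) (dSOSPAn_le_one hc (Y.poly j) (Z.poly k))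
          (dSOSPAn_nonneg hc (X.poly i) (Z.poly k)) (dSOSPAn_le_one hc (X.poly i) (Z.poly k))
          (dSOSPAn_triangle hc (X.poly i) (Y.poly j) (Z.poly k))
        linarith
      · have hf2 : θ₂.filter (fun q => q.1 = j) = ∅ := by
          refine Finset.filter_eq_empty_iff.2 fun q hq hqj => hB ⟨q.2, ?_⟩
          rwa [← hqj, Prod.mk.eta]
        rw [hf1, hf2, Finset.sum_singleton, Finset.sum_empty]
        have hmin : min (X.r i) (Y.r j) * (1 - dSOSPAn c 1 (X.poly i) (Y.poly j)) ≤ Y.r j := by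
          have h1 := dSOSPAn_nonneg hc (X.poly i) (Y.poly j)
          have h2 : min (X.r i) (Y.r j) ≤ Y.r j := min_le_right _ _
          have h3 : 0 ≤ min (X.r i) (Y.r j) := le_min (X.r_nonneg i) (Y.r_nonneg j)
          nlinarith
        linarith
    · have hf1 : θ₁.filter (fun p => p.2 = j) = ∅ := by
        refine Finset.filter_eq_empty_iff.2 fun p hp hpj => hA ⟨p.1, ?_⟩
        rwa [← hpj, Prod.mk.eta]
      rw [hf1, Finset.sum_empty]
      by_cases hB : ∃ k, (j, k) ∈ θ₂
      · obtain ⟨k, hk⟩ := hB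
        have hf2 : θ₂.filter (fun q => q.1 = j) = {(j, k)} := by
          refine Finset.eq_singleton_iff_unique_mem.2 ⟨Finset.mem_filter.2 ⟨hk, rfl⟩, ?_⟩
          intro q hq
          obtain ⟨hqθ, hqj⟩ := Finset.mem_filter.1 hq
          exact h₂.fst_inj hqθ hk hqj
        rw [hf2, Finset.sum_singleton]
        have hmin : min (Y.r j) (Z.r k) * (1 - dSOSPAn c 1 (Y.poly j) (Z.poly k)) ≤ Y.r j := by
          have h1 := dSOSPAn_nonneg hc (Y.poly j) (Z.poly k)
          have h2 : min (Y.r j) (Z.r k) ≤ Y.r j := min_le_left _ _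
          have h3 : 0 ≤ min (Y.r j) (Z.r k) := le_min (Y.r_nonneg j) (Z.r_nonneg k)
          nlinarith
        linarith
      · have hf2 : θ₂.filter (fun q => q.1 = j) = ∅ := by
          refine Finset.filter_eq_empty_iff.2 fun q hq hqj => hB ⟨q.2, ?_⟩
          rwa [← hqj, Prod.mk.eta]
        rw [hf2, Finset.sum_empty]
        have := Y.r_nonneg j
        linarith

end Dap

section Spld
variable {E : Type*} [MetricSpace E]

lemma min_eq_avg_sub_abs (r s : ℝ) : min r s = (r + s) / 2 - |r - s| / 2 := by
  rcases le_total r s with h | h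
  · rw [min_eq_left h, abs_of_nonpos (by linarith)]; ring
  · rw [min_eq_right h, abs_of_nonneg (by linarith)]; ring

lemma dPLD_cost_eq (c : ℝ) (X Y : PPSet E) {θ : Finset (Fin X.n × Fin Y.n)}
    (hθ : IsAssignment θ) :
    ∑ ij ∈ θ, (min (X.r ij.1) (Y.r ij.2) * dSOSPAn c 1 (X.poly ij.1) (Y.poly ij.2)
        + |X.r ij.1 - Y.r ij.2| / 2)
      + (∑ i ∈ Finset.univ.filter (fun i => ∀ j, (i, j) ∉ θ), X.r i
          + ∑ j ∈ Finset.univ.filter (fun j => ∀ i, (i, j) ∉ θ), Y.r j) / 2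
    = (totalR X + totalR Y) / 2 - Wfun c X Y θ := by
  classical
  have hXimg : Finset.univ.filter (fun i => ∀ j, (i, j) ∉ θ)
      = Finset.univ \ θ.image Prod.fst := by
    ext i
    simp only [Finset.mem_filter, Finset.mem_univ, true_and, Finset.mem_sdiff,
      Finset.mem_image]
    constructor
    · intro h
      push_neg
      intro p hp hpi
      exact absurd (show (i, p.2) ∈ θ by rw [← hpi]; simpa using hp) (h p.2)
    · intro h j hj
      push_neg at h
      exact h (i, j) hj rfl
  have hYimg : Finset.univ.filter (fun j => ∀ i, (i, j) ∉ θ)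
      = Finset.univ \ θ.image Prod.snd := by
    ext j
    simp only [Finset.mem_filter, Finset.mem_univ, true_and, Finset.mem_sdiff,
      Finset.mem_image]
    constructor
    · intro h
      push_neg
      intro p hp hpj
      exact absurd (show (p.1, j) ∈ θ by rw [← hpj]; simpa using hp) (h p.1)
    · intro h i hi
      push_neg at h
      exact h (i, j) hi rfl
  have hXsum : ∑ i ∈ Finset.univ.filter (fun i => ∀ j, (i, j) ∉ θ), X.r i
      = totalR X - ∑ ij ∈ θ, X.r ij.1 := by
    rw [hXimg, Finset.sum_sdiff_eq_sub (Finset.subset_univ _)]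
    have : ∑ i ∈ θ.image Prod.fst, X.r i = ∑ ij ∈ θ, X.r ij.1 :=
      Finset.sum_image fun a ha b hb hab => hθ.fst_inj ha hb hab
    rw [this]; rfl
  have hYsum : ∑ j ∈ Finset.univ.filter (fun j => ∀ i, (i, j) ∉ θ), Y.r j
      = totalR Y - ∑ ij ∈ θ, Y.r ij.2 := by
    rw [hYimg, Finset.sum_sdiff_eq_sub (Finset.subset_univ _)]
    have : ∑ j ∈ θ.image Prod.snd, Y.r j = ∑ ij ∈ θ, Y.r ij.2 :=
      Finset.sum_image fun a ha b hb hab => hθ.snd_inj ha hb hab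
    rw [this]; rfl
  have habs : ∑ ij ∈ θ, |X.r ij.1 - Y.r ij.2| / 2
      = (∑ ij ∈ θ, X.r ij.1 + ∑ ij ∈ θ, Y.r ij.2) / 2
        - ∑ ij ∈ θ, min (X.r ij.1) (Y.r ij.2) := by
    have : ∀ ij ∈ θ, |X.r ij.1 - Y.r ij.2| / 2
        = (X.r ij.1 + Y.r ij.2) / 2 - min (X.r ij.1) (Y.r ij.2) := by
      intro ij _
      rw [min_eq_avg_sub_abs]
      ring
    rw [Finset.sum_congr rfl this, Finset.sum_sub_distrib]
    congr 1
    rw [← Finset.sum_div, Finset.sum_add_distrib]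
  have hW : Wfun c X Y θ = ∑ ij ∈ θ, min (X.r ij.1) (Y.r ij.2)
      - ∑ ij ∈ θ, min (X.r ij.1) (Y.r ij.2) * dSOSPAn c 1 (X.poly ij.1) (Y.poly ij.2) := by
    rw [Wfun, ← Finset.sum_sub_distrib]
    exact Finset.sum_congr rfl fun ij _ => by ring
  rw [Finset.sum_add_distrib, habs, hXsum, hYsum, hW]
  ring

lemma dPLD_one (c : ℝ) (X Y : PPSet E) :
    dPLD c 1 X Y = ⨅ θ : {θ : Finset (Fin X.n × Fin Y.n) // IsAssignment θ},
      ((totalR X + totalR Y) / 2 - Wfun c X Y θ.1) := by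
  unfold dPLD
  rw [show (1 : ℝ) / 1 = 1 by norm_num, Real.rpow_one]
  refine iInf_congr fun θ => ?_
  simp only [Real.rpow_one]
  exact dPLD_cost_eq c X Y θ.2

lemma dPLD_le (c : ℝ) (X Y : PPSet E) {θ : Finset (Fin X.n × Fin Y.n)} (h : IsAssignment θ) :
    dPLD c 1 X Y ≤ (totalR X + totalR Y) / 2 - Wfun c X Y θ := by
  rw [dPLD_one]
  exact myiInf_le (fun θ' : {θ' : Finset (Fin X.n × Fin Y.n) // IsAssignment θ'} =>
    (totalR X + totalR Y) / 2 - Wfun c X Y θ'.1) ⟨θ, h⟩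

lemma exists_dPLD_eq (c : ℝ) (X Y : PPSet E) :
    ∃ θ : {θ : Finset (Fin X.n × Fin Y.n) // IsAssignment θ},
      dPLD c 1 X Y = (totalR X + totalR Y) / 2 - Wfun c X Y θ.1 := by
  rw [dPLD_one]
  obtain ⟨θ, hθ, -⟩ := exists_iInf_eq
    (fun θ : {θ : Finset (Fin X.n × Fin Y.n) // IsAssignment θ} =>
      (totalR X + totalR Y) / 2 - Wfun c X Y θ.1)
  exact ⟨θ, hθ⟩

lemma SPLD_ge (c : ℝ) (X Y : PPSet E) {θ : Finset (Fin X.n × Fin Y.n)} (h : IsAssignment θ) :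
    Wfun c X Y θ / 2 ≤ SPLD c X Y := by
  have := dPLD_le c X Y h
  unfold SPLD
  linarith

lemma exists_SPLD_eq (c : ℝ) (X Y : PPSet E) :
    ∃ θ : {θ : Finset (Fin X.n × Fin Y.n) // IsAssignment θ},
      SPLD c X Y = Wfun c X Y θ.1 / 2 := by
  obtain ⟨θ, hθ⟩ := exists_dPLD_eq c X Y
  refine ⟨θ, ?_⟩
  unfold SPLD
  rw [hθ]
  ring

lemma SPLD_self_ge {c : ℝ} (hc : 0 < c) (Y : PPSet E) : totalR Y / 2 ≤ SPLD c Y Y := by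
  have hdiag : IsAssignment ((Finset.univ : Finset (Fin Y.n)).image fun j => (j, j)) := by
    intro a ha b hb
    simp only [Finset.mem_image] at ha hb
    obtain ⟨i, -, rfl⟩ := ha
    obtain ⟨j, -, rfl⟩ := hb
    exact Iff.rfl
  have hW : Wfun c Y Y ((Finset.univ : Finset (Fin Y.n)).image fun j => (j, j)) = totalR Y := by
    rw [Wfun, Finset.sum_image (fun a _ b _ hab => (Prod.ext_iff.1 hab).1)]
    refine Finset.sum_congr rfl fun j _ => ?_
    rw [dSOSPAn_self hc (Y.poly j)]
    simp
  have := SPLD_ge c Y Y hdiag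
  rw [hW] at this
  exact this

end Spld

/-- For `p = 1`, the DAP similarity satisfies
`S_PLD^{(c,1)}(Y,Y) + S_PLD^{(c,1)}(X,Z) ≥ S_PLD^{(c,1)}(X,Y) + S_PLD^{(c,1)}(Y,Z)`. -/
theorem SPLD_quadrangle {E : Type*} [MetricSpace E] (c : ℝ) (hc : 0 < c)
    (X Y Z : PPSet E) :
    SPLD c X Y + SPLD c Y Z ≤ SPLD c Y Y + SPLD c X Z := by
  obtain ⟨θ₁, hθ₁⟩ := exists_SPLD_eq c X Y
  obtain ⟨θ₂, hθ₂⟩ := exists_SPLD_eq c Y Z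
  have hcomp := W_compose hc X Y Z θ₁.2 θ₂.2
  have h3 : Wfun c X Z (composeAssignment θ₁.1 θ₂.1) / 2 ≤ SPLD c X Z :=
    SPLD_ge c X Z (composeAssignment_isAssignment θ₁.2 θ₂.2)
  have h4 := SPLD_self_ge hc Y
  rw [hθ₁, hθ₂]
  linarith
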